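/- Let G = (V,E) be a finite simple graph with a 1-critical bifiltration given by crit : E → ℝ², let e = {a,b} be an edge of G, and define C := {crit(e)} ∪ { crit_e(w₁) ∗ crit_e(w₂) : w₁, w₂ ∈ N_G(e) } (where w₁ = w₂ is allowed). Then for every grade q ∈ ℝ² with crit(e) ≤ q, there exists c ∈ C with c ≤ q such that N_{G_c}(e) = N_{G_q}(e). -/

import Mathlib

/-- The subgraph of `G` at grade `c` in a 1-critical bifiltration: it keeps
exactly the edges whose critical grade is `≤ c` (componentwise order on `ℝ²`). -/
def gradedSubgraph {V : Type*} (G : SimpleGraph V) (crit : Sym2 V → ℝ × ℝ)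
    (c : ℝ × ℝ) : SimpleGraph V where
  Adj u v := G.Adj u v ∧ crit s(u, v) ≤ c
  symm := by
    constructor
    intro u v h
    refine ⟨h.1.symm, ?_⟩
    rw [Sym2.eq_swap]
    exact h.2
  loopless := ⟨fun u h => G.irrefl h.1⟩

/-- `w` is an edge neighbor of the edge `{a,b}` in `H`: it is adjacent to both endpoints. -/
def edgeNbr {V : Type*} (H : SimpleGraph V) (a b w : V) : Prop :=
  H.Adj a w ∧ H.Adj b w

/-- The edge `{a,b}` is dominated by `v` in `H`. -/
def dominatedBy {V : Type*} (H : SimpleGraph V) (a b v : V) : Prop :=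
  edgeNbr H a b v ∧ ∀ w, edgeNbr H a b w → w ≠ v → H.Adj v w

/-- The edge `{a,b}` is dominated in `H` (by some vertex). -/
def dominated {V : Type*} (H : SimpleGraph V) (a b : V) : Prop :=
  ∃ v, dominatedBy H a b v

/-- `crit_e(w) = crit(e) ∗ crit({a,w}) ∗ crit({b,w})`, the grade at which `w`
becomes an edge neighbor of `e = {a,b}`. -/
def critE {V : Type*} (crit : Sym2 V → ℝ × ℝ) (a b w : V) : ℝ × ℝ :=
  crit s(a, b) ⊔ crit s(a, w) ⊔ crit s(b, w)

/-- The set `C = {crit(e)} ∪ {crit_e(w₁) ∗ crit_e(w₂) : w₁, w₂ ∈ N_G(e)}`. -/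
def critJoins {V : Type*} (G : SimpleGraph V) (crit : Sym2 V → ℝ × ℝ)
    (a b : V) : Set (ℝ × ℝ) :=
  {crit s(a, b)} ∪
    {x | ∃ w₁ w₂, edgeNbr G a b w₁ ∧ edgeNbr G a b w₂ ∧
      x = critE crit a b w₁ ⊔ critE crit a b w₂}

/-- `Δ(p,q) = {r : p ≤ r ∧ ¬ q ≤ r}`. -/
def Delta (p q : ℝ × ℝ) : Set (ℝ × ℝ) := {r | p ≤ r ∧ ¬ q ≤ r}

/-! A neighbor `w` of `{a,b}` is present at a grade `c ≥ crit(a,b)` iff `crit_e(w) ≤ c`.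
Among the finitely many neighbors present at `q`, take `w₁` maximizing the first coordinate
of `crit_e` and `w₂` maximizing the second: then `crit_e(w₁) ∗ crit_e(w₂)` lies in `C`, is `≤ q`,
and bounds `crit_e(w)` for every such neighbor, so all of them are already present there. -/

theorem Finset.exists_pair_forall_le_sup_prod {ι α β : Type*} [LinearOrder α] [LinearOrder β]
    (s : Finset ι) (f : ι → α × β) (hs : s.Nonempty) :
    ∃ i ∈ s, ∃ j ∈ s, ∀ k ∈ s, f k ≤ f i ⊔ f j := by
  obtain ⟨i, hi, hmax₁⟩ := s.exists_max_image (fun k => (f k).1) hs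
  obtain ⟨j, hj, hmax₂⟩ := s.exists_max_image (fun k => (f k).2) hs
  exact ⟨i, hi, j, hj, fun k hk =>
    ⟨(hmax₁ k hk).trans le_sup_left, (hmax₂ k hk).trans le_sup_right⟩⟩

section GradedEdgeNbrs

variable {V : Type*} {G : SimpleGraph V} {crit : Sym2 V → ℝ × ℝ} {a b : V}

theorem edgeNbr_gradedSubgraph_mono {c d : ℝ × ℝ} (hcd : c ≤ d) {w : V}
    (hw : edgeNbr (gradedSubgraph G crit c) a b w) :
    edgeNbr (gradedSubgraph G crit d) a b w :=
  ⟨⟨hw.1.1, hw.1.2.trans hcd⟩, hw.2.1, hw.2.2.trans hcd⟩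

theorem edgeNbr_of_edgeNbr_gradedSubgraph {c : ℝ × ℝ} {w : V}
    (hw : edgeNbr (gradedSubgraph G crit c) a b w) : edgeNbr G a b w :=
  ⟨hw.1.1, hw.2.1⟩

theorem critE_le_of_edgeNbr_gradedSubgraph {c : ℝ × ℝ} (hc : crit s(a, b) ≤ c) {w : V}
    (hw : edgeNbr (gradedSubgraph G crit c) a b w) : critE crit a b w ≤ c :=
  sup_le (sup_le hc hw.1.2) hw.2.2

theorem edgeNbr_gradedSubgraph_of_critE_le {c : ℝ × ℝ} {w : V} (hw : edgeNbr G a b w)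
    (hwc : critE crit a b w ≤ c) : edgeNbr (gradedSubgraph G crit c) a b w :=
  ⟨⟨hw.1, le_sup_right.trans (le_sup_left.trans hwc)⟩, hw.2, le_sup_right.trans hwc⟩

theorem edgeNbrs_gradedSubgraph_eq_of_forall_critE_le {c q : ℝ × ℝ} (hcq : c ≤ q)
    (h : ∀ w, edgeNbr (gradedSubgraph G crit q) a b w → critE crit a b w ≤ c) :
    {w | edgeNbr (gradedSubgraph G crit c) a b w} =
      {w | edgeNbr (gradedSubgraph G crit q) a b w} :=
  Set.ext fun w => ⟨edgeNbr_gradedSubgraph_mono hcq, fun hw =>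
    edgeNbr_gradedSubgraph_of_critE_le
      (edgeNbr_of_edgeNbr_gradedSubgraph hw) (h w hw)⟩

end GradedEdgeNbrs

theorem exists_critJoin_same_edgeNbrs_general
    {V : Type*} [Fintype V] (G : SimpleGraph V) (crit : Sym2 V → ℝ × ℝ)
    (a b : V) (q : ℝ × ℝ) (hq : crit s(a, b) ≤ q) :
    ∃ c ∈ critJoins G crit a b, c ≤ q ∧
      {w | edgeNbr (gradedSubgraph G crit c) a b w} =
        {w | edgeNbr (gradedSubgraph G crit q) a b w} := by
  classical
  set S := Finset.univ.filter (edgeNbr (gradedSubgraph G crit q) a b)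
  have hmemS : ∀ w, w ∈ S ↔ edgeNbr (gradedSubgraph G crit q) a b w := by simp [S]
  rcases S.eq_empty_or_nonempty with hS | hS
  · refine ⟨crit s(a, b), Or.inl rfl, hq,
      edgeNbrs_gradedSubgraph_eq_of_forall_critE_le hq fun w hw => ?_⟩
    simpa [hS] using (hmemS w).2 hw
  · obtain ⟨w₁, hw₁, w₂, hw₂, hmax⟩ := S.exists_pair_forall_le_sup_prod (critE crit a b) hS
    rw [hmemS] at hw₁ hw₂
    have hcq : critE crit a b w₁ ⊔ critE crit a b w₂ ≤ q :=
      sup_le (critE_le_of_edgeNbr_gradedSubgraph hq hw₁)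
        (critE_le_of_edgeNbr_gradedSubgraph hq hw₂)
    exact ⟨_, Or.inr ⟨w₁, w₂, edgeNbr_of_edgeNbr_gradedSubgraph hw₁,
        edgeNbr_of_edgeNbr_gradedSubgraph hw₂, rfl⟩, hcq,
      edgeNbrs_gradedSubgraph_eq_of_forall_critE_le hcq
        fun w hw => hmax w ((hmemS w).2 hw)⟩

/-- For every grade `q` above `crit(e)` there is a grade
`c ∈ C` with `c ≤ q` whose edge-neighbor set of `e` agrees with that at `q`. -/
theorem exists_critJoin_same_edgeNbrs
    {V : Type*} [Fintype V] (G : SimpleGraph V) (crit : Sym2 V → ℝ × ℝ)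
    (a b : V) (hab : G.Adj a b) (q : ℝ × ℝ) (hq : crit s(a, b) ≤ q) :
    ∃ c ∈ critJoins G crit a b, c ≤ q ∧
      {w | edgeNbr (gradedSubgraph G crit c) a b w} =
        {w | edgeNbr (gradedSubgraph G crit q) a b w} :=
  exists_critJoin_same_edgeNbrs_general G crit a b q hq
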